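/- The bicomplex Prabhakar function splits along idempotent components: for ζ = ζ₁e₁ + ζ₂e₂, ς = ς₁e₁ + ς₂e₂, τ = τ₁e₁ + τ₂e₂, δ = δ₁e₁ + δ₂e₂ with Re(ς₁), Re(ς₂) > 0, one has E^δ_{ς,τ}(ζ) = E^{δ₁}_{ς₁,τ₁}(ζ₁)e₁ + E^{δ₂}_{ς₂,τ₂}(ζ₂)e₂. -/

import Mathlib

noncomputable def prabTerm (ς τ δ z : ℂ) (k : ℕ) : ℂ :=
  (∏ i ∈ Finset.range k, (δ + i)) * z ^ k /
    ((k.factorial : ℂ) * Complex.Gamma (ς * k + τ))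

/-- The complex Prabhakar (three-parameter Mittag-Leffler) function. -/
noncomputable def cPrab (ς τ δ z : ℂ) : ℂ := ∑' k : ℕ, prabTerm ς τ δ z k

/-- First idempotent component `ζ₁ = w₁ - i₁ w₂`. -/
def P1 (z : ℂ × ℂ) : ℂ := z.1 - Complex.I * z.2
/-- Second idempotent component `ζ₂ = w₁ + i₁ w₂`. -/
def P2 (z : ℂ × ℂ) : ℂ := z.1 + Complex.I * z.2
/-- The bicomplex number `a e₁ + b e₂`. -/
noncomputable def fromIdem (a b : ℂ) : ℂ × ℂ := ((a + b) / 2, Complex.I * (a - b) / 2)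

/-- The bicomplex Prabhakar function: the series with Gamma and Pochhammer
taken componentwise via the idempotent decomposition. -/
noncomputable def bPrab (ς τ δ ζ : ℂ × ℂ) : ℂ × ℂ :=
  ∑' k : ℕ, fromIdem (prabTerm (P1 ς) (P1 τ) (P1 δ) (P1 ζ) k)
    (prabTerm (P2 ς) (P2 τ) (P2 δ) (P2 ζ) k)

section Aux
open MeasureTheory Real Set

lemma P1_fromIdem (a b : ℂ) : P1 (fromIdem a b) = a := by
  simp only [P1, fromIdem]
  field_simp
  ring_nf
  rw [Complex.I_sq]
  ring

lemma P2_fromIdem (a b : ℂ) : P2 (fromIdem a b) = b := by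
  simp only [P2, fromIdem]
  field_simp
  ring_nf
  rw [Complex.I_sq]
  ring

lemma hasSum_fromIdem {f g : ℕ → ℂ} {A B : ℂ} (hf : HasSum f A) (hg : HasSum g B) :
    HasSum (fun k => fromIdem (f k) (g k)) (fromIdem A B) := by
  have h1 : ∀ a b : ℂ, fromIdem a b
      = a • (((1:ℂ)/2, Complex.I/2) : ℂ × ℂ) + b • (((1:ℂ)/2, -Complex.I/2) : ℂ × ℂ) := by
    intro a b
    simp only [fromIdem, Prod.smul_mk, Prod.mk_add_mk, smul_eq_mul, Prod.mk.injEq]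
    constructor <;> ring
  simp only [h1]
  exact (hf.smul_const _).add (hg.smul_const _)




lemma norm_Gamma_le (z : ℂ) (hz : 0 < z.re) :
    ‖Complex.Gamma z‖ ≤ Real.Gamma z.re := by
  rw [Complex.Gamma_eq_integral hz, Real.Gamma_eq_integral hz, Complex.GammaIntegral]
  refine le_trans (norm_integral_le_integral_norm _) (le_of_eq ?_)
  refine setIntegral_congr_fun measurableSet_Ioi fun x hx => ?_
  rw [Set.mem_Ioi] at hx
  rw [norm_mul, Complex.norm_real, Real.norm_eq_abs,
    Complex.norm_cpow_eq_rpow_re_of_pos hx, abs_of_pos (Real.exp_pos _), Complex.sub_re,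
    Complex.one_re]

lemma Gamma_ne_neg_nat {w : ℂ} (hw : 0 < w.re) : ∀ m : ℕ, w ≠ -m := by
  intro m h
  have : w.re = -m := by rw [h]; simp
  rw [this] at hw
  have : (0:ℝ) ≤ m := Nat.cast_nonneg m
  linarith

lemma strip_lower : ∃ c : ℝ, 0 < c ∧ ∀ w : ℂ, 1 ≤ w.re → w.re ≤ 2 →
    c / Real.exp (π * |w.im|) ≤ ‖Complex.Gamma w‖ := by
  set K : Set ℂ := {w | w.re ∈ Set.Icc (1:ℝ) 2 ∧ w.im ∈ Set.Icc (-1:ℝ) 1} with hK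
  have hKclosed : IsClosed K := by
    have : K = Complex.re ⁻¹' (Set.Icc 1 2) ∩ Complex.im ⁻¹' (Set.Icc (-1) 1) := rfl
    rw [this]
    exact (isClosed_Icc.preimage Complex.continuous_re).inter
      (isClosed_Icc.preimage Complex.continuous_im)
  have hKbdd : Bornology.IsBounded K := by
    refine (Metric.isBounded_closedBall (x := (0:ℂ)) (r := 3)).subset ?_
    intro w hw
    simp only [Metric.mem_closedBall, dist_zero_right]
    calc ‖w‖ ≤ |w.re| + |w.im| := Complex.norm_le_abs_re_add_abs_im w
      _ ≤ 2 + 1 := by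
          have h1 := hw.1; have h2 := hw.2
          simp only [Set.mem_Icc] at h1 h2
          gcongr <;> [exact abs_le.mpr ⟨by linarith [h1.1], h1.2⟩;
            exact abs_le.mpr ⟨h2.1, h2.2⟩]
      _ ≤ 3 := by norm_num
  have hKcomp : IsCompact K := Metric.isCompact_of_isClosed_isBounded hKclosed hKbdd
  have hcont : ContinuousOn (fun w => ‖Complex.Gamma w‖) K := by
    apply continuousOn_of_forall_continuousAt
    intro w hw
    have hre : (1:ℝ) ≤ w.re := hw.1.1
    exact continuous_norm.continuousAt.comp
      (Complex.differentiableAt_Gamma w (Gamma_ne_neg_nat (by linarith))).continuousAt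
  have hKne : K.Nonempty := ⟨1, by constructor <;> simp⟩
  obtain ⟨w₀, hw₀K, hmin'⟩ := hKcomp.exists_isMinOn hKne hcont
  have hmin : ∀ w ∈ K, ‖Complex.Gamma w₀‖ ≤ ‖Complex.Gamma w‖ :=
    fun w hw => hmin' hw
  have hc₁ : 0 < ‖Complex.Gamma w₀‖ := by
    rw [norm_pos_iff]
    exact Complex.Gamma_ne_zero_of_re_pos (by have := hw₀K.1.1; linarith)
  refine ⟨min (‖Complex.Gamma w₀‖) (π / 2), lt_min hc₁ (by positivity), ?_⟩
  intro w h1 h2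
  set c := min (‖Complex.Gamma w₀‖) (π / 2) with hc
  have hcpos : 0 < c := lt_min hc₁ (by positivity)
  by_cases him : |w.im| ≤ 1
  · have hwK : w ∈ K := ⟨⟨h1, h2⟩, Set.mem_Icc.mpr (abs_le.mp him)⟩
    calc c / Real.exp (π * |w.im|) ≤ c / 1 := by
          apply div_le_div_of_nonneg_left hcpos.le one_pos
          rw [← Real.exp_zero]
          exact Real.exp_le_exp.mpr (by positivity)
      _ = c := div_one c
      _ ≤ ‖Complex.Gamma w₀‖ := min_le_left _ _
      _ ≤ ‖Complex.Gamma w‖ := hmin w hwK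
  · have him1 : 1 < |w.im| := not_le.mp him
    have him0 : w.im ≠ 0 := by
      intro h; rw [h] at him1; simp at him1; linarith
    have h1w : (1:ℂ) - w ≠ 0 := by
      intro h
      apply him0
      have : w = 1 := by linear_combination -h
      rw [this]; simp
    have h2w : (2:ℂ) - w ≠ 0 := by
      intro h
      apply him0
      have : w = 2 := by linear_combination -h
      rw [this]; simp
    have hsin : Complex.sin (π * w) ≠ 0 := by
      rw [Ne, Complex.sin_eq_zero_iff]
      rintro ⟨k, hk⟩
      apply him0
      have hπ : ((π:ℝ):ℂ) ≠ 0 := Complex.ofReal_ne_zero.mpr Real.pi_ne_zero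
      have : w = (k:ℂ) := by
        apply mul_left_cancel₀ hπ
        rw [hk]; ring
      rw [this]; simp
    have hre3 : (0:ℝ) < (3 - w).re := by
      simp only [Complex.sub_re]
      norm_num
      linarith
    have hG3 : Complex.Gamma (3 - w) ≠ 0 := Complex.Gamma_ne_zero_of_re_pos hre3
    have hrec1 : Complex.Gamma (2 - w) = (1 - w) * Complex.Gamma (1 - w) := by
      have h : (2:ℂ) - w = (1 - w) + 1 := by ring
      rw [h, Complex.Gamma_add_one _ h1w]
    have hrec2 : Complex.Gamma (3 - w) = (2 - w) * Complex.Gamma (2 - w) := by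
      have h : (3:ℂ) - w = (2 - w) + 1 := by ring
      rw [h, Complex.Gamma_add_one _ h2w]
    have hid' : Complex.Gamma w * Complex.Gamma (1 - w) * Complex.sin (π * w) = π := by
      rw [Complex.Gamma_mul_Gamma_one_sub w]
      field_simp
    have key : Complex.Gamma w * (Complex.Gamma (3 - w) * Complex.sin (π * w))
        = (π:ℂ) * ((1 - w) * (2 - w)) := by
      rw [hrec2, hrec1]
      linear_combination ((2 - w) * (1 - w)) * hid'
    have hGw : Complex.Gamma w
        = (π:ℂ) * ((1 - w) * (2 - w)) / (Complex.Gamma (3 - w) * Complex.sin (π * w)) := by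
      rw [eq_div_iff (mul_ne_zero hG3 hsin)]
      linear_combination key
    -- bounds
    have habs1 : 1 ≤ ‖1 - w‖ := by
      calc (1:ℝ) ≤ |w.im| := him1.le
        _ = |((1:ℂ) - w).im| := by simp [Complex.sub_im]
        _ ≤ ‖1 - w‖ := Complex.abs_im_le_norm _
    have habs2 : 1 ≤ ‖2 - w‖ := by
      calc (1:ℝ) ≤ |w.im| := him1.le
        _ = |((2:ℂ) - w).im| := by simp [Complex.sub_im]
        _ ≤ ‖2 - w‖ := Complex.abs_im_le_norm _
    have hΓ3le : ‖Complex.Gamma (3 - w)‖ ≤ 1 := by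
      refine (norm_Gamma_le _ hre3).trans ?_
      have hmem : (3 - w).re ∈ segment ℝ (1:ℝ) 2 := by
        rw [segment_eq_Icc (by norm_num : (1:ℝ) ≤ 2)]
        simp only [Complex.sub_re]
        constructor <;> [norm_num; norm_num] <;> linarith
      have := Real.convexOn_Gamma.le_on_segment (by norm_num : (1:ℝ) ∈ Set.Ioi 0)
        (by norm_num : (2:ℝ) ∈ Set.Ioi 0) hmem
      rwa [Real.Gamma_one, Real.Gamma_two, max_self] at this
    have hsinle : ‖Complex.sin (π * w)‖ ≤ Real.exp (π * |w.im|) := by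
      rw [Complex.sin]
      rw [norm_div, norm_mul, Complex.norm_I, mul_one, Complex.norm_two]
      have e1 : ‖Complex.exp (-(π * w) * Complex.I)‖ ≤ Real.exp (π * |w.im|) := by
        rw [Complex.norm_exp]
        apply Real.exp_le_exp.mpr
        have : (-(↑π * w) * Complex.I).re = π * w.im := by
          simp [Complex.mul_re, Complex.mul_im]
        rw [this]
        calc π * w.im ≤ π * |w.im| :=
          mul_le_mul_of_nonneg_left (le_abs_self _) Real.pi_pos.le
          _ ≤ π * |w.im| := le_refl _
      have e2 : ‖Complex.exp ((π * w) * Complex.I)‖ ≤ Real.exp (π * |w.im|) := by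
        rw [Complex.norm_exp]
        apply Real.exp_le_exp.mpr
        have : ((↑π * w) * Complex.I).re = -(π * w.im) := by
          simp [Complex.mul_re, Complex.mul_im]
        rw [this]
        calc -(π * w.im) = π * (-w.im) := by ring
          _ ≤ π * |w.im| := mul_le_mul_of_nonneg_left (neg_le_abs _) Real.pi_pos.le
      calc ‖Complex.exp (-(π * w) * Complex.I) - Complex.exp (π * w * Complex.I)‖ / 2
          ≤ (‖Complex.exp (-(π * w) * Complex.I)‖
            + ‖Complex.exp (π * w * Complex.I)‖) / 2 := by
            apply div_le_div_of_nonneg_right ?_ (by norm_num)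
            exact norm_sub_le _ _
        _ ≤ (Real.exp (π * |w.im|) + Real.exp (π * |w.im|)) / 2 := by gcongr
        _ = Real.exp (π * |w.im|) := by ring
    have hdpos : 0 < ‖Complex.Gamma (3 - w)‖ * ‖Complex.sin (π * w)‖ := by
      apply mul_pos <;> rw [norm_pos_iff] <;> assumption
    have final : c / Real.exp (π * |w.im|)
        ≤ π * (‖1 - w‖ * ‖2 - w‖)
          / (‖Complex.Gamma (3 - w)‖ * ‖Complex.sin (π * w)‖) := by
      apply div_le_div₀ (by positivity) ?_ hdpos ?_
      · calc c ≤ π / 2 := min_le_right _ _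
          _ ≤ π := by linarith [Real.pi_pos]
          _ = π * 1 := (mul_one π).symm
          _ ≤ π * (‖1 - w‖ * ‖2 - w‖) := by
              apply mul_le_mul_of_nonneg_left ?_ Real.pi_pos.le
              calc (1:ℝ) = 1 * 1 := (one_mul 1).symm
                _ ≤ _ := mul_le_mul habs1 habs2 one_pos.le (le_trans one_pos.le habs1)
      · calc ‖Complex.Gamma (3 - w)‖ * ‖Complex.sin (π * w)‖
            ≤ 1 * Real.exp (π * |w.im|) := by
              apply mul_le_mul hΓ3le hsinle (norm_nonneg _) one_pos.le
          _ = Real.exp (π * |w.im|) := one_mul _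
    refine final.trans (le_of_eq ?_)
    rw [hGw, norm_div, norm_mul, norm_mul, norm_mul, Complex.norm_real, Real.norm_eq_abs, abs_of_pos Real.pi_pos]



lemma Gamma_shift (w : ℂ) (hw : 0 < w.re) (n : ℕ) :
    Complex.Gamma (w + n) = (∏ j ∈ Finset.range n, (w + j)) * Complex.Gamma w := by
  induction n with
  | zero => simp
  | succ n ih =>
    have hne : w + n ≠ 0 := by
      intro h
      have : (w + n).re = 0 := by rw [h]; simp
      simp only [Complex.add_re, Complex.natCast_re] at this
      have : (0:ℝ) ≤ (n:ℝ) := Nat.cast_nonneg n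
      linarith [‹(w + ↑n).re = 0›]
    have h : w + (↑(n+1) : ℂ) = (w + n) + 1 := by push_cast; ring
    rw [h, Complex.Gamma_add_one _ hne, ih, Finset.prod_range_succ]
    ring

lemma pow_le_fact (m : ℕ) (hm : 1 ≤ m) (n : ℕ) :
    (m:ℝ)^n ≤ (m:ℝ)^m * (n.factorial : ℝ) := by
  induction n with
  | zero => simp; exact one_le_pow₀ (by exact_mod_cast hm)
  | succ n ih =>
    by_cases h : m ≤ n + 1
    · calc (m:ℝ)^(n+1) = (m:ℝ) * (m:ℝ)^n := by ring
        _ ≤ (m:ℝ) * ((m:ℝ)^m * n.factorial) := by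
            apply mul_le_mul_of_nonneg_left ih (by positivity)
        _ ≤ (n+1 : ℝ) * ((m:ℝ)^m * n.factorial) := by
            apply mul_le_mul_of_nonneg_right ?_ (by positivity)
            exact_mod_cast h
        _ = (m:ℝ)^m * ((n+1) * n.factorial) := by ring
        _ = (m:ℝ)^m * ((n+1).factorial) := by rw [Nat.factorial_succ]; push_cast; ring
    · push_neg at h
      calc (m:ℝ)^(n+1) ≤ (m:ℝ)^m := by
            apply pow_le_pow_right₀ (by exact_mod_cast hm) (by omega)
        _ ≤ (m:ℝ)^m * (n+1).factorial := by
            nth_rewrite 1 [← mul_one ((m:ℝ)^m)]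
            apply mul_le_mul_of_nonneg_left ?_ (by positivity)
            exact_mod_cast Nat.one_le_iff_ne_zero.mpr (Nat.factorial_ne_zero _)
set_option maxHeartbeats 1000000 in
lemma summable_prabTerm (ς τ δ z : ℂ) (hς : 0 < ς.re) : Summable (prabTerm ς τ δ z) := by
  obtain ⟨c, hc, hstrip⟩ := strip_lower
  set d : ℝ := ‖δ‖ with hd
  have hd0 : 0 ≤ d := norm_nonneg δ
  set B : ℝ := Real.exp (π * |ς.im|) with hB
  have hB0 : 0 < B := Real.exp_pos _
  set R : ℝ := (d + 1) * ‖z‖ * B with hRdef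
  have hR0 : 0 ≤ R := by positivity
  set a : ℝ := ς.re with ha
  obtain ⟨m, hm1, hmR⟩ : ∃ m : ℕ, 1 ≤ m ∧ R + 1 ≤ (m:ℝ) ^ a := by
    refine ⟨⌈(R+1) ^ (1/a)⌉₊ + 1, Nat.le_add_left 1 _, ?_⟩
    have h1 : ((R+1) ^ (1/a) : ℝ) ≤ ((⌈(R+1)^(1/a)⌉₊ + 1 : ℕ) : ℝ) := by
      push_cast
      linarith [Nat.le_ceil ((R+1)^(1/a) : ℝ)]
    calc R + 1 = ((R+1) ^ (1/a)) ^ a := by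
          rw [← Real.rpow_mul (by positivity), one_div, inv_mul_cancel₀ (ne_of_gt hς),
            Real.rpow_one]
      _ ≤ ((⌈(R+1)^(1/a)⌉₊ + 1 : ℕ) : ℝ) ^ a := Real.rpow_le_rpow (by positivity) h1 hς.le
  have hm0 : (0:ℝ) < m := by exact_mod_cast hm1
  have hm1' : (1:ℝ) ≤ m := by exact_mod_cast hm1
  have hma : (0:ℝ) < (m:ℝ)^a := Real.rpow_pos_of_pos hm0 a
  set r : ℝ := R / (m:ℝ)^a with hr
  have hr0 : 0 ≤ r := div_nonneg hR0 hma.le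
  have hr1 : r < 1 := by rw [hr, div_lt_one hma]; linarith
  set M : ℝ := (m:ℝ)^(m:ℕ) * (m:ℝ) ^ ((2:ℝ) - τ.re) with hM
  have hMpos : 0 < M := mul_pos (pow_pos hm0 m) (Real.rpow_pos_of_pos hm0 _)
  set Eτ : ℝ := Real.exp (π * |τ.im|) with hEτ
  have hEτ0 : 0 < Eτ := Real.exp_pos _
  set C : ℝ := Eτ * M / c with hC
  set K : ℕ := ⌈(2 - τ.re)/a⌉₊ with hK
  apply Summable.of_norm_bounded_eventually_nat (g := fun k => C * r ^ k)
    ((summable_geometric_of_lt_one hr0 hr1).mul_left C)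
  filter_upwards [Filter.eventually_ge_atTop K] with k hk
  set x : ℝ := a * k + τ.re with hx
  have hx2 : 2 ≤ x := by
    have h1 : ((2 - τ.re)/a) ≤ (K:ℝ) := Nat.le_ceil _
    have h2 : (K:ℝ) ≤ k := by exact_mod_cast hk
    have h3 : (2 - τ.re)/a * a ≤ (k:ℝ) * a := mul_le_mul_of_nonneg_right (h1.trans h2) hς.le
    rw [div_mul_cancel₀ _ (ne_of_gt hς)] at h3
    rw [hx]; linarith
  have hre : (ς * k + τ).re = x := by
    simp [Complex.add_re, Complex.mul_re, hx, ha]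
  have him : (ς * k + τ).im = ς.im * k + τ.im := by
    simp [Complex.add_im, Complex.mul_im]
  set n : ℕ := ⌊x⌋₊ - 1 with hn
  have hfl2 : 2 ≤ ⌊x⌋₊ := Nat.le_floor (by exact_mod_cast hx2)
  have hncast : (n:ℝ) = (⌊x⌋₊ : ℝ) - 1 := by
    rw [hn, Nat.cast_sub (by omega)]; norm_num
  have hnx : x - 2 ≤ (n:ℝ) := by
    have := Nat.lt_floor_add_one x
    rw [hncast]; linarith
  have hnlex : (n:ℝ) ≤ x - 1 := by
    have := Nat.floor_le (by linarith : (0:ℝ) ≤ x)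
    rw [hncast]; linarith
  set w : ℂ := (ς * k + τ) - n with hw
  have hwre : w.re = x - n := by rw [hw]; simp [Complex.sub_re, hre]
  have hwre1 : 1 ≤ w.re := by rw [hwre]; linarith
  have hwre2 : w.re ≤ 2 := by rw [hwre]; linarith
  have hwim : w.im = ς.im * k + τ.im := by rw [hw]; simp [Complex.sub_im, him]
  have hsplit : Complex.Gamma (ς * k + τ)
      = (∏ j ∈ Finset.range n, (w + j)) * Complex.Gamma w := by
    have h : ς * (k:ℂ) + τ = w + n := by rw [hw]; ring
    rw [h, Gamma_shift w (by linarith) n]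
  have hprod_lb : (n.factorial : ℝ) ≤ ‖∏ j ∈ Finset.range n, (w + j)‖ := by
    rw [norm_prod]
    calc (n.factorial:ℝ) = ∏ j ∈ Finset.range n, ((j:ℝ) + 1) := by
          rw [← Finset.prod_range_add_one_eq_factorial]; push_cast; rfl
      _ ≤ ∏ j ∈ Finset.range n, ‖w + j‖ := by
          apply Finset.prod_le_prod (fun j _ => by positivity)
          intro j _
          calc (j:ℝ) + 1 ≤ w.re + j := by linarith [hwre1]
            _ = (w + j).re := by simp
            _ ≤ |(w + j).re| := le_abs_self _
            _ ≤ ‖w + j‖ := Complex.abs_re_le_norm _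
  set Ey : ℝ := Real.exp (π * |w.im|) with hEy
  have hEy0 : 0 < Ey := Real.exp_pos _
  have hGl : (n.factorial : ℝ) * (c / Ey) ≤ ‖Complex.Gamma (ς * k + τ)‖ := by
    rw [hsplit, norm_mul]
    exact mul_le_mul hprod_lb (hstrip w hwre1 hwre2) (by positivity) (by positivity)
  have hkf0 : (0:ℝ) < (k.factorial : ℝ) := by exact_mod_cast Nat.factorial_pos k
  have hnf0 : (0:ℝ) < (n.factorial : ℝ) := by exact_mod_cast Nat.factorial_pos n
  have hnum : ‖(∏ i ∈ Finset.range k, (δ + i)) * z ^ k‖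
      ≤ (d+1)^k * (k.factorial:ℝ) * ‖z‖ ^ k := by
    rw [norm_mul, norm_pow]
    apply mul_le_mul_of_nonneg_right ?_ (by positivity)
    rw [norm_prod]
    calc ∏ i ∈ Finset.range k, ‖δ + i‖
        ≤ ∏ i ∈ Finset.range k, ((d+1)*((i:ℝ)+1)) := by
          apply Finset.prod_le_prod (fun _ _ => norm_nonneg _)
          intro i _
          calc ‖δ + i‖ ≤ d + i := by
                refine (norm_add_le _ _).trans ?_
                simp [hd]
            _ ≤ (d+1)*((i:ℝ)+1) := by nlinarith [Nat.cast_nonneg (α := ℝ) i]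
      _ = (d+1)^k * ∏ i ∈ Finset.range k, ((i:ℝ)+1) := by
          rw [Finset.prod_mul_distrib, Finset.prod_const, Finset.card_range]
      _ = (d+1)^k * (k.factorial:ℝ) := by
          rw [← Finset.prod_range_add_one_eq_factorial]; push_cast; rfl
  have hterm : ‖prabTerm ς τ δ z k‖
      ≤ ((d+1)^k * (k.factorial:ℝ) * ‖z‖ ^ k)
        / ((k.factorial:ℝ) * ((n.factorial : ℝ) * (c / Ey))) := by
    rw [prabTerm, norm_div]
    rw [show ‖((k.factorial:ℕ):ℂ) * Complex.Gamma (ς * k + τ)‖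
        = (k.factorial:ℝ) * ‖Complex.Gamma (ς * k + τ)‖ from by
      rw [norm_mul, Complex.norm_natCast]]
    apply div_le_div₀ ?_ ?_ (by positivity) (mul_le_mul_of_nonneg_left hGl hkf0.le)
    · positivity
    · exact hnum
  have hsimp : ((d+1)^k * (k.factorial:ℝ) * ‖z‖ ^ k)
        / ((k.factorial:ℝ) * ((n.factorial : ℝ) * (c / Ey)))
      = ((d+1) * ‖z‖)^k * Ey / ((n.factorial:ℝ) * c) := by
    rw [mul_pow]
    field_simp
  have hEyle : Ey ≤ B ^ k * Eτ := by
    calc Ey ≤ Real.exp (π * (|ς.im| * k + |τ.im|)) := by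
          apply Real.exp_le_exp.mpr
          apply mul_le_mul_of_nonneg_left ?_ Real.pi_pos.le
          rw [hwim]
          refine (abs_add_le _ _).trans ?_
          rw [abs_mul, Nat.abs_cast]
      _ = Real.exp ((k:ℝ) * (π * |ς.im|)) * Eτ := by
          rw [← Real.exp_add]; ring_nf
      _ = B ^ k * Eτ := by rw [← Real.exp_nat_mul]
  have hfact : ((m:ℝ)^a)^k ≤ (n.factorial : ℝ) * M := by
    have h1 : ((m:ℝ)^a)^k * (m:ℝ)^(τ.re - 2 : ℝ) = (m:ℝ)^(x - 2 : ℝ) := by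
      rw [← Real.rpow_natCast ((m:ℝ)^a) k, ← Real.rpow_mul hm0.le, ← Real.rpow_add hm0]
      congr 1
      rw [hx]; ring
    have h5 : ((m:ℝ)^a)^k = (m:ℝ)^(x-2:ℝ) * (m:ℝ)^((2:ℝ)-τ.re) := by
      rw [← h1, mul_assoc, ← Real.rpow_add hm0]
      norm_num
    have h2 : (m:ℝ)^(x-2:ℝ) ≤ (m:ℝ)^((n:ℕ):ℝ) := Real.rpow_le_rpow_of_exponent_le hm1' hnx
    have h3 : (m:ℝ)^((n:ℕ):ℝ) = (m:ℝ)^(n:ℕ) := Real.rpow_natCast _ _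
    have h4 : (m:ℝ)^(n:ℕ) ≤ (m:ℝ)^(m:ℕ) * n.factorial := pow_le_fact m hm1 n
    rw [h5, hM]
    calc (m:ℝ)^(x-2:ℝ) * (m:ℝ)^((2:ℝ)-τ.re)
        ≤ ((m:ℝ)^(m:ℕ) * (n.factorial:ℝ)) * (m:ℝ)^((2:ℝ)-τ.re) := by
          apply mul_le_mul_of_nonneg_right ((h2.trans_eq h3).trans h4)
            (Real.rpow_nonneg hm0.le _)
      _ = (n.factorial:ℝ) * ((m:ℝ)^(m:ℕ) * (m:ℝ)^((2:ℝ)-τ.re)) := by ring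
  have hkey : R^k / (n.factorial:ℝ) ≤ M * r^k := by
    have hrk : r^k = R^k / ((m:ℝ)^a)^k := div_pow R _ k
    calc R^k / (n.factorial:ℝ) = R^k * M / ((n.factorial:ℝ) * M) := by
          rw [mul_div_mul_right _ _ (ne_of_gt hMpos)]
      _ ≤ R^k * M / (((m:ℝ)^a)^k) := by
          apply div_le_div_of_nonneg_left (by positivity) (by positivity) hfact
      _ = M * (R^k / ((m:ℝ)^a)^k) := by ring
      _ = M * r^k := by rw [hrk]
  calc ‖prabTerm ς τ δ z k‖
      ≤ ((d+1) * ‖z‖)^k * Ey / ((n.factorial:ℝ) * c) := hterm.trans (le_of_eq hsimp)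
    _ ≤ ((d+1) * ‖z‖)^k * (B^k * Eτ) / ((n.factorial:ℝ) * c) := by
        gcongr
    _ = Eτ / c * (R^k / (n.factorial:ℝ)) := by
        rw [hRdef, mul_pow ((d+1) * ‖z‖) B]
        ring
    _ ≤ Eτ / c * (M * r^k) := by
        apply mul_le_mul_of_nonneg_left hkey (by positivity)
    _ = C * r^k := by rw [hC]; ring

end Aux

theorem bicomplex_prabhakar_idempotent_split
    (ς₁ ς₂ τ₁ τ₂ δ₁ δ₂ ζ₁ ζ₂ : ℂ) (hς₁ : 0 < ς₁.re) (hς₂ : 0 < ς₂.re) :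
    bPrab (fromIdem ς₁ ς₂) (fromIdem τ₁ τ₂) (fromIdem δ₁ δ₂) (fromIdem ζ₁ ζ₂) =
      fromIdem (cPrab ς₁ τ₁ δ₁ ζ₁) (cPrab ς₂ τ₂ δ₂ ζ₂) := by
  have hf := summable_prabTerm ς₁ τ₁ δ₁ ζ₁ hς₁
  have hg := summable_prabTerm ς₂ τ₂ δ₂ ζ₂ hς₂
  rw [bPrab]
  simp only [P1_fromIdem, P2_fromIdem]
  rw [cPrab, cPrab]
  exact (hasSum_fromIdem hf.hasSum hg.hasSum).tsum_eq
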